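/- Let p be a prime, x, y, z, t ∈ Q, and α, β ∈ Q_p nonzero with v_p(α) = −r_α and v_p(β) = −r_β. Let h_α, h_β ≥ 1 be integers, let A and B be the h_α-digit truncation of α and the h_β-digit truncation of β, and set v = v_p(xAB + yA + zB + t) and M = min{v_p(x) − r_α − r_β + min{h_α, h_β}, v_p(y) − r_α + h_α, v_p(z) − r_β + h_β}. Then for all α′, β′ ∈ Q_p with v_p(α′) = −r_α, v_p(β′) = −r_β, v_p(α − α′) ≥ −r_α + h_α and v_p(β − β′) ≥ −r_β + h_β, one has v_p((xαβ + yα + zβ + t) − (xα′β′ + yα′ + zβ′ + t)) ≥ M. In particular, if k = M − v ≥ 1, then v_p(xαβ + yα + zβ + t) = v, and xαβ + yα + zβ + t and xα′β′ + yα′ + zβ′ + t agree in their first k digits. -/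

import Mathlib

open scoped Classical

/-- The `p`-adic valuation on `ℚ_[p]`, with `vp p 0 = ⊤` (i.e. `v_p(0) = +∞`). -/
noncomputable def vp (p : ℕ) [Fact p.Prime] (x : ℚ_[p]) : WithTop ℤ :=
  if x = 0 then ⊤ else (x.valuation : WithTop ℤ)

/-- `A` is the `h`-digit truncation of `α`, where `v_p(α) = -r`: `A` is a rational with
`p^r · A ∈ {0, 1, …, p^h - 1}` and `v_p(α - A) ≥ -r + h`. -/
def IsTrunc (p : ℕ) [Fact p.Prime] (α : ℚ_[p]) (r : ℤ) (h : ℕ) (A : ℚ) : Prop :=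
  (∃ m : ℕ, (p : ℚ) ^ r * A = m ∧ m < p ^ h) ∧
    ((-r + h : ℤ) : WithTop ℤ) ≤ vp p (α - (A : ℚ_[p]))

section helpers
variable {p : ℕ} [Fact p.Prime]

lemma vp_eq_addVal (x : ℚ_[p]) : vp p x = Padic.addValuation x := by
  rw [Padic.addValuation, AddValuation.of_apply]; rfl

lemma vp_mul (a b : ℚ_[p]) : vp p (a * b) = vp p a + vp p b := by
  simp only [vp_eq_addVal]; exact AddValuation.map_mul _ a b

lemma vp_add_ge (a b : ℚ_[p]) : min (vp p a) (vp p b) ≤ vp p (a + b) := by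
  simp only [vp_eq_addVal]; exact AddValuation.map_add _ a b

lemma vp_le_add {g : WithTop ℤ} {a b : ℚ_[p]} (ha : g ≤ vp p a) (hb : g ≤ vp p b) :
    g ≤ vp p (a + b) :=
  le_trans (le_min ha hb) (vp_add_ge a b)

lemma vp_neg (a : ℚ_[p]) : vp p (-a) = vp p a := by
  simp only [vp_eq_addVal]; exact Valuation.map_neg Padic.addValuation a

lemma vp_add_eq_of_lt {a b : ℚ_[p]} (h : vp p b < vp p a) : vp p (a + b) = vp p b := by
  have h1 : min (vp p a) (vp p b) ≤ vp p (a + b) := vp_add_ge a b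
  rw [min_eq_right h.le] at h1
  refine le_antisymm ?_ h1
  have h2 := vp_add_ge (a + b) (-a)
  have e : a + b + -a = b := by ring
  rw [e, vp_neg] at h2
  rcases min_le_iff.mp h2 with h' | h'
  · exact h'
  · exact absurd h' (not_le.mpr h)

lemma vp_eq_top_iff {a : ℚ_[p]} : vp p a = ⊤ ↔ a = 0 := by
  unfold vp
  by_cases h : a = 0 <;> simp [h]

end helpers

/-- with `A, B` the truncations, `v = v_p(xAB + yA + zB + t)` and
`M = min{v_p(x) - r_α - r_β + min{h_α, h_β}, v_p(y) - r_α + h_α, v_p(z) - r_β + h_β}`: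
for all `α', β'` agreeing with `α, β` in their first `h_α`, `h_β` digits,
`v_p((xαβ + yα + zβ + t) - (xα'β' + yα' + zβ' + t)) ≥ M`; in particular, if
`k = M - v ≥ 1` (encoded additively as `v + 1 ≤ M`) then
`v_p(xαβ + yα + zβ + t) = v`, and the two quantities agree in their first `k` digits. -/
theorem stmt10 (p : ℕ) [Fact p.Prime] (x y z t : ℚ)
    (α β : ℚ_[p]) (hα0 : α ≠ 0) (hβ0 : β ≠ 0) (rα rβ : ℤ)
    (hvα : vp p α = ((-rα : ℤ) : WithTop ℤ)) (hvβ : vp p β = ((-rβ : ℤ) : WithTop ℤ))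
    (hα hβ : ℕ) (hhα : 1 ≤ hα) (hhβ : 1 ≤ hβ)
    (A B : ℚ) (hA : IsTrunc p α rα hα A) (hB : IsTrunc p β rβ hβ B) :
    (∀ α' β' : ℚ_[p],
        vp p α' = ((-rα : ℤ) : WithTop ℤ) → vp p β' = ((-rβ : ℤ) : WithTop ℤ) →
        ((-rα + hα : ℤ) : WithTop ℤ) ≤ vp p (α - α') →
        ((-rβ + hβ : ℤ) : WithTop ℤ) ≤ vp p (β - β') →
        min (vp p ((x : ℚ) : ℚ_[p]) + ((-rα - rβ + min (hα : ℤ) (hβ : ℤ) : ℤ) : WithTop ℤ))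
            (min (vp p ((y : ℚ) : ℚ_[p]) + ((-rα + hα : ℤ) : WithTop ℤ))
              (vp p ((z : ℚ) : ℚ_[p]) + ((-rβ + hβ : ℤ) : WithTop ℤ)))
          ≤ vp p (((x : ℚ_[p]) * α * β + (y : ℚ_[p]) * α + (z : ℚ_[p]) * β + (t : ℚ_[p]))
              - ((x : ℚ_[p]) * α' * β' + (y : ℚ_[p]) * α' + (z : ℚ_[p]) * β' + (t : ℚ_[p])))) ∧
    (vp p ((x * A * B + y * A + z * B + t : ℚ) : ℚ_[p]) + 1
        ≤ min (vp p ((x : ℚ) : ℚ_[p]) + ((-rα - rβ + min (hα : ℤ) (hβ : ℤ) : ℤ) : WithTop ℤ))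
            (min (vp p ((y : ℚ) : ℚ_[p]) + ((-rα + hα : ℤ) : WithTop ℤ))
              (vp p ((z : ℚ) : ℚ_[p]) + ((-rβ + hβ : ℤ) : WithTop ℤ))) →
      vp p ((x : ℚ_[p]) * α * β + (y : ℚ_[p]) * α + (z : ℚ_[p]) * β + (t : ℚ_[p]))
        = vp p ((x * A * B + y * A + z * B + t : ℚ) : ℚ_[p])) := by
  set M : WithTop ℤ :=
    min (vp p ((x : ℚ) : ℚ_[p]) + ((-rα - rβ + min (hα : ℤ) (hβ : ℤ) : ℤ) : WithTop ℤ))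
      (min (vp p ((y : ℚ) : ℚ_[p]) + ((-rα + hα : ℤ) : WithTop ℤ))
        (vp p ((z : ℚ) : ℚ_[p]) + ((-rβ + hβ : ℤ) : WithTop ℤ))) with hM
  have key : ∀ α' β' : ℚ_[p], vp p β' = ((-rβ : ℤ) : WithTop ℤ) →
      ((-rα + hα : ℤ) : WithTop ℤ) ≤ vp p (α - α') →
      ((-rβ + hβ : ℤ) : WithTop ℤ) ≤ vp p (β - β') →
      M ≤ vp p (((x : ℚ_[p]) * α * β + (y : ℚ_[p]) * α + (z : ℚ_[p]) * β + (t : ℚ_[p]))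
              - ((x : ℚ_[p]) * α' * β' + (y : ℚ_[p]) * α' + (z : ℚ_[p]) * β' + (t : ℚ_[p]))) := by
    intro α' β' hβ' hdα hdβ
    have e : ((x : ℚ_[p]) * α * β + (y : ℚ_[p]) * α + (z : ℚ_[p]) * β + (t : ℚ_[p]))
              - ((x : ℚ_[p]) * α' * β' + (y : ℚ_[p]) * α' + (z : ℚ_[p]) * β' + (t : ℚ_[p]))
        = (x : ℚ_[p]) * (α * (β - β')) + ((x : ℚ_[p]) * ((α - α') * β')
            + ((y : ℚ_[p]) * (α - α') + (z : ℚ_[p]) * (β - β'))) := by ring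
    rw [e]
    refine vp_le_add ?_ (vp_le_add ?_ (vp_le_add ?_ ?_))
    · rw [vp_mul, vp_mul, hvα]
      refine le_trans (min_le_left _ _) ?_
      refine le_trans ?_ (add_le_add_right (add_le_add_right hdβ _) _)
      have step : ((-rα - rβ + min (hα : ℤ) (hβ : ℤ) : ℤ) : WithTop ℤ)
          ≤ ((-rα : ℤ) : WithTop ℤ) + ((-rβ + hβ : ℤ) : WithTop ℤ) := by
        rw [← WithTop.coe_add, WithTop.coe_le_coe]; omega
      exact add_le_add_right step _
    · rw [vp_mul, vp_mul, hβ']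
      refine le_trans (min_le_left _ _) ?_
      have step : ((-rα - rβ + min (hα : ℤ) (hβ : ℤ) : ℤ) : WithTop ℤ)
          ≤ ((-rα + hα : ℤ) : WithTop ℤ) + ((-rβ : ℤ) : WithTop ℤ) := by
        rw [← WithTop.coe_add, WithTop.coe_le_coe]; omega
      refine le_trans ?_ (add_le_add_right (add_le_add_left hdα _) _)
      exact add_le_add_right step _
    · rw [vp_mul]
      exact le_trans (min_le_right _ _) (le_trans (min_le_left _ _) (add_le_add_right hdα _))
    · rw [vp_mul]
      exact le_trans (min_le_right _ _) (le_trans (min_le_right _ _) (add_le_add_right hdβ _))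
  refine ⟨fun α' β' _ hβ' h1 h2 => key α' β' hβ' h1 h2, ?_⟩
  intro hyp
  -- vp B = -rβ
  obtain ⟨-, hAv⟩ := hA
  obtain ⟨-, hBv⟩ := hB
  have hvB : vp p ((B : ℚ) : ℚ_[p]) = ((-rβ : ℤ) : WithTop ℤ) := by
    have hlt : vp p β < vp p (((B : ℚ) : ℚ_[p]) - β) := by
      have : vp p (((B : ℚ) : ℚ_[p]) - β) = vp p (β - ((B : ℚ) : ℚ_[p])) := by
        rw [show ((B : ℚ) : ℚ_[p]) - β = -(β - ((B : ℚ) : ℚ_[p])) by ring, vp_neg]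
      rw [this, hvβ]
      refine lt_of_lt_of_le ?_ hBv
      exact_mod_cast by omega
    have := vp_add_eq_of_lt (a := ((B : ℚ) : ℚ_[p]) - β) (b := β) (by rw [hvβ] at hlt ⊢; exact hlt)
    rw [show ((B : ℚ) : ℚ_[p]) - β + β = ((B : ℚ) : ℚ_[p]) by ring] at this
    rw [this, hvβ]
  have castF : ((x * A * B + y * A + z * B + t : ℚ) : ℚ_[p])
      = (x : ℚ_[p]) * ((A : ℚ) : ℚ_[p]) * ((B : ℚ) : ℚ_[p]) + (y : ℚ_[p]) * ((A : ℚ) : ℚ_[p])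
        + (z : ℚ_[p]) * ((B : ℚ) : ℚ_[p]) + (t : ℚ_[p]) := by
    push_cast; ring
  have hkey := key ((A : ℚ) : ℚ_[p]) ((B : ℚ) : ℚ_[p]) hvB hAv hBv
  rw [← castF] at hkey
  set E := (x : ℚ_[p]) * α * β + (y : ℚ_[p]) * α + (z : ℚ_[p]) * β + (t : ℚ_[p]) with hE
  set F := ((x * A * B + y * A + z * B + t : ℚ) : ℚ_[p]) with hF
  by_cases hFtop : vp p F = ⊤
  · have hF0 : F = 0 := vp_eq_top_iff.mp hFtop
    have hMtop : M = ⊤ := top_le_iff.mp (by rw [hFtop] at hyp; simpa using hyp)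
    have : vp p (E - F) = ⊤ := top_le_iff.mp (hMtop ▸ hkey)
    have hEF : E - F = 0 := vp_eq_top_iff.mp this
    rw [sub_eq_zero.mp hEF]
  · have hlt : vp p F < vp p (E - F) := by
      refine lt_of_lt_of_le (lt_of_lt_of_le ?_ hyp) hkey
      obtain ⟨n, hn⟩ := WithTop.ne_top_iff_exists.mp hFtop
      rw [← hn, ← WithTop.coe_one, ← WithTop.coe_add, WithTop.coe_lt_coe]
      omega
    have := vp_add_eq_of_lt (a := E - F) (b := F) hlt
    rw [sub_add_cancel] at this
    exact this
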